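/- arXiv:1107.3909 — 5 statements merged into one kernel-verified Lean document; each statement's English description precedes it below -/
import Mathlib

section
/- There are no integers s ≥ 2 and t ≥ 2 such that s + 1 divides t + 1, gcd(s,t) = 1, and s + t divides st(s+1)(t+1). -/
theorem stmt_0 (s t : ℕ) (hs : 2 ≤ s) (ht : 2 ≤ t)
    (hdvd : (s + 1) ∣ (t + 1)) (hcop : Nat.gcd s t = 1)
    (hdiv : (s + t) ∣ (s * t * (s + 1) * (t + 1))) : False := by
  have hts : s ≤ t := by
    have := Nat.le_of_dvd (by omega) hdvd; omega
  -- s+t coprime to s*t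
  have hcs : Nat.Coprime (s + t) s := by
    have : Nat.Coprime (t + s) s := Nat.coprime_add_self_left.mpr (Nat.coprime_comm.mp hcop)
    simpa [Nat.add_comm] using this
  have hct : Nat.Coprime (s + t) t := Nat.coprime_add_self_left.mpr hcop
  have hcst : Nat.Coprime (s + t) (s * t) := Nat.Coprime.mul_right hcs hct
  have hA : (s + t) ∣ (s + 1) * (t + 1) := by
    refine hcst.dvd_of_dvd_mul_left ?_
    have : s * t * ((s + 1) * (t + 1)) = s * t * (s + 1) * (t + 1) := by ring
    rw [this]; exact hdiv
  -- (s+t) ∣ (s+1)*(s-1)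
  have hB : (s + t) ∣ (s + 1) * (s - 1) := by
    have h1 : (s + t) ∣ (s + 1) * (s + t) := Dvd.intro (s + 1) (mul_comm _ _)
    have h2 : (s + 1) * (s + t) - (s + 1) * (t + 1) = (s + 1) * (s - 1) := by
      rw [← Nat.mul_sub]
      congr 1
      omega
    have := Nat.dvd_sub h1 hA
    rwa [h2] at this
  -- gcd(s+t, s+1) ∣ 2
  have hd2 : Nat.gcd (s + t) (s + 1) ∣ 2 := by
    have g1 : Nat.gcd (s + t) (s + 1) ∣ s + t := Nat.gcd_dvd_left _ _
    have g2 : Nat.gcd (s + t) (s + 1) ∣ t + 1 := (Nat.gcd_dvd_right _ _).trans hdvd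
    have g3 : Nat.gcd (s + t) (s + 1) ∣ (s + 1) + (t + 1) :=
      Nat.dvd_add (Nat.gcd_dvd_right _ _) g2
    have : Nat.gcd (s + t) (s + 1) ∣ (s + 1 + (t + 1)) - (s + t) := Nat.dvd_sub g3 g1
    simpa [show s + 1 + (t + 1) - (s + t) = 2 by omega] using this
  -- s+t ∣ (s-1) * gcd(s+t, s+1)
  have hC : (s + t) ∣ (s - 1) * Nat.gcd (s + t) (s + 1) := by
    have h1 : (s + t) ∣ (s - 1) * (s + t) := Dvd.intro (s - 1) (mul_comm _ _)
    have h2 : (s + t) ∣ (s - 1) * (s + 1) := by rwa [mul_comm] at hB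
    have := Nat.dvd_gcd h1 h2
    rwa [Nat.gcd_mul_left] at this
  have hD : (s + t) ∣ (s - 1) * 2 := hC.trans (mul_dvd_mul_left _ hd2)
  have := Nat.le_of_dvd (by omega) hD
  omega
end

section
/- There do not exist integers s ≥ 2 and a prime power p^d with d ≥ 2 such that (s+1)(s²+1) = p^d; that is, (s+1)(s²+1) is never a prime power p^d with d ≥ 2. -/
theorem stmt_7 (s : ℕ) (hs : 2 ≤ s) (p : ℕ) (hp : p.Prime) (d : ℕ) (hd : 2 ≤ d) :
    (s + 1) * (s ^ 2 + 1) ≠ p ^ d := by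
  intro h
  have h1 : (s + 1) ∣ p ^ d := ⟨s ^ 2 + 1, h.symm⟩
  have h2 : (s ^ 2 + 1) ∣ p ^ d := ⟨s + 1, by rw [← h]; ring⟩
  obtain ⟨a, ha, hea⟩ := (Nat.dvd_prime_pow hp).mp h1
  obtain ⟨b, hb, heb⟩ := (Nat.dvd_prime_pow hp).mp h2
  have hpa : p ∣ s + 1 := by
    rcases Nat.eq_zero_or_pos a with rfl | hpos
    · simp at hea; omega
    · exact hea ▸ dvd_pow_self p hpos.ne'
  have hpb : p ∣ s ^ 2 + 1 := by
    rcases Nat.eq_zero_or_pos b with rfl | hpos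
    · simp at heb; nlinarith
    · exact heb ▸ dvd_pow_self p hpos.ne'
  have hdecomp : s ^ 2 + 1 = (s + 1) * (s - 1) + 2 := by
    have hs1 : s - 1 + 1 = s := by omega
    nlinarith [hs1]
  have hp2 : p ∣ 2 :=
    (Nat.dvd_add_right (Dvd.dvd.mul_right hpa (s - 1))).mp (hdecomp ▸ hpb)
  have hp2' : p = 2 := (Nat.prime_dvd_prime_iff_eq hp Nat.prime_two).mp hp2
  subst hp2'
  obtain ⟨k, hk⟩ : Odd s := by
    rcases Nat.even_or_odd s with ⟨m, hm⟩ | ho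
    · omega
    · exact ho
  have hb3 : 2 ≤ b := by
    by_contra hlt
    interval_cases b <;> nlinarith
  have h4 : 4 ∣ s ^ 2 + 1 := by
    have : (2 : ℕ) ^ 2 ∣ 2 ^ b := pow_dvd_pow 2 hb3
    rw [← heb] at this
    simpa using this
  obtain ⟨c, hc⟩ := h4
  have : s ^ 2 + 1 = 4 * (k * k + k) + 2 := by subst hk; ring
  omega
end

section
/- Let δ ≥ 2 and k ≥ 2 be integers and suppose s, t ≥ 2 satisfy s + 1 ≤ δ, δ^k = (s+1)(st+1), and t ≤ s². Then k ≤ 3. -/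
theorem stmt_10 (δ k s t : ℕ) (hδ : 2 ≤ δ) (hk : 2 ≤ k) (hs : 2 ≤ s)
    (ht : 2 ≤ t) (hline : s + 1 ≤ δ) (hcard : δ ^ k = (s + 1) * (s * t + 1))
    (higman : t ≤ s ^ 2) : k ≤ 3 := by
  by_contra h
  push_neg at h
  have hk4 : 4 ≤ k := h
  have h1 : δ ^ (k - 1) ≤ s * t + 1 := by
    have hδpos : 0 < δ := by omega
    have : δ * δ ^ (k - 1) ≤ δ * (s * t + 1) := by
      calc δ * δ ^ (k - 1) = δ ^ k := by
            rw [← pow_succ']; congr 1; omega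
        _ = (s + 1) * (s * t + 1) := hcard
        _ ≤ δ * (s * t + 1) := Nat.mul_le_mul_right _ hline
    exact Nat.le_of_mul_le_mul_left this hδpos
  have h2 : δ ^ 3 ≤ δ ^ (k - 1) := Nat.pow_le_pow_right (by omega) (by omega)
  have h3 : s * t ≤ s ^ 3 := by nlinarith
  have h4 : s ^ 3 + 1 < δ ^ 3 := by
    have := Nat.pow_le_pow_left hline 3
    nlinarith
  linarith
end

section
/- For all integers m ≥ 4, b ≥ 3 with n = m·b ≥ 16, one has n! / ((m!)^b · b!) ≥ (2.2)^n. -/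
open Finset

private lemma prod_fac_le (n k : ℕ) (f : ℕ → ℚ) (h0 : ∀ i, 0 ≤ f i)
    (h : ∀ i < k, f i ≤ ((n + i + 1 : ℕ) : ℚ)) :
    (∏ i ∈ Finset.range k, f i) * (n.factorial : ℚ) ≤ ((n + k).factorial : ℚ) := by
  induction k with
  | zero => simp
  | succ k ih =>
    have h1 : (∏ i ∈ Finset.range k, f i) * (n.factorial : ℚ) ≤ ((n + k).factorial : ℚ) :=
      ih (fun i hi => h i (Nat.lt_succ_of_lt hi))
    have hfk := h k (Nat.lt_succ_self k)
    have hfac : ((n + (k + 1)).factorial : ℚ) = ((n + k + 1 : ℕ) : ℚ) * ((n + k).factorial : ℚ) := by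
      rw [show n + (k + 1) = (n + k) + 1 by ring, Nat.factorial_succ]
      push_cast; ring
    rw [Finset.prod_range_succ, hfac]
    have hp : (0 : ℚ) ≤ ∏ i ∈ Finset.range k, f i := Finset.prod_nonneg (fun i _ => h0 i)
    have hfacpos : (0 : ℚ) ≤ ((n + k).factorial : ℚ) := by positivity
    calc (∏ i ∈ Finset.range k, f i) * f k * (n.factorial : ℚ)
        = f k * ((∏ i ∈ Finset.range k, f i) * (n.factorial : ℚ)) := by ring
      _ ≤ f k * ((n + k).factorial : ℚ) := by
          exact mul_le_mul_of_nonneg_left h1 (h0 k)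
      _ ≤ ((n + k + 1 : ℕ) : ℚ) * ((n + k).factorial : ℚ) := by
          exact mul_le_mul_of_nonneg_right hfk hfacpos

private lemma aux_pow (t : ℚ) (ht : 4 ≤ t) : ∀ a : ℕ, 4 ≤ a → t * (11/5 : ℚ) ^ a ≤ t ^ a := by
  intro a ha
  induction a, ha using Nat.le_induction with
  | base =>
    have h0 : (0 : ℚ) ≤ t := by linarith
    have h3 : (14641/625 : ℚ) ≤ t ^ 3 := by nlinarith [sq_nonneg (t-4), mul_nonneg (sub_nonneg.2 ht) (sq_nonneg (t-4))]
    calc t * (11/5 : ℚ) ^ 4 = t * (14641/625) := by norm_num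
      _ ≤ t * t ^ 3 := mul_le_mul_of_nonneg_left h3 h0
      _ = t ^ 4 := by ring
  | succ n hn ih =>
    have h0 : (0 : ℚ) ≤ t := by linarith
    have htn : (0 : ℚ) ≤ t ^ n := pow_nonneg h0 n
    calc t * (11/5 : ℚ) ^ (n + 1) = (11/5) * (t * (11/5) ^ n) := by ring
      _ ≤ (11/5) * t ^ n := by nlinarith [pow_nonneg (show (0:ℚ) ≤ 11/5 by norm_num) n]
      _ ≤ t * t ^ n := by nlinarith
      _ = t ^ (n + 1) := by ring

private def P (a b : ℕ) : Prop :=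
  ((a.factorial : ℚ)) ^ b * (b.factorial : ℚ) * (11/5 : ℚ) ^ (a * b) ≤ ((a * b).factorial : ℚ)

private lemma step_a (a b : ℕ) (ha : 4 ≤ a) (hb : 3 ≤ b) (hP : P a b) : P (a + 1) b := by
  unfold P at *
  have key := prod_fac_le (a * b) b (fun _ => ((a : ℚ) + 1) * (11/5))
    (fun i => by positivity)
    (fun i hi => by
      push_cast
      have hb' : (3 : ℚ) ≤ (b : ℚ) := by exact_mod_cast hb
      have ha' : (4 : ℚ) ≤ (a : ℚ) := by exact_mod_cast ha
      have hi' : (0 : ℚ) ≤ (i : ℚ) := Nat.cast_nonneg i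
      nlinarith)
  rw [Finset.prod_const, Finset.card_range] at key
  have hfacnn : (0 : ℚ) ≤ ((a * b).factorial : ℚ) := by positivity
  have h1 : (((a+1) * b).factorial : ℚ) = ((a * b + b).factorial : ℚ) := by
    congr 1; ring
  rw [h1]
  calc ((a+1).factorial : ℚ) ^ b * (b.factorial : ℚ) * (11/5 : ℚ) ^ ((a+1) * b)
      = (((a:ℚ)+1) * (11/5)) ^ b *
          ((a.factorial : ℚ) ^ b * (b.factorial : ℚ) * (11/5 : ℚ) ^ (a * b)) := by
        rw [Nat.factorial_succ, show (a+1) * b = a * b + b by ring, pow_add]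
        push_cast
        rw [mul_pow, mul_pow]
        ring
    _ ≤ (((a:ℚ)+1) * (11/5)) ^ b * ((a * b).factorial : ℚ) := by
        exact mul_le_mul_of_nonneg_left hP (by positivity)
    _ ≤ ((a * b + b).factorial : ℚ) := key

private lemma step_b (a b : ℕ) (ha : 4 ≤ a) (hb : 3 ≤ b) (hP : P a b) : P a (b + 1) := by
  unfold P at *
  have key := prod_fac_le (a * b) a (fun i => ((i : ℚ) + 1) * ((b : ℚ) + 1))
    (fun i => by positivity)
    (fun i hi => by
      push_cast
      have hia : (i : ℚ) + 1 ≤ (a : ℚ) := by exact_mod_cast Nat.succ_le_of_lt hi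
      have hb' : (0 : ℚ) ≤ (b : ℚ) := Nat.cast_nonneg b
      nlinarith)
  have hprod : (∏ i ∈ Finset.range a, ((i : ℚ) + 1) * ((b : ℚ) + 1))
      = (a.factorial : ℚ) * ((b : ℚ) + 1) ^ a := by
    rw [Finset.prod_mul_distrib, Finset.prod_const, Finset.card_range]
    congr 1
    rw [← Finset.prod_range_add_one_eq_factorial a]
    push_cast
    rfl
  rw [hprod] at key
  have hb1 : (4 : ℚ) ≤ (b : ℚ) + 1 := by
    have : (3 : ℚ) ≤ (b : ℚ) := by exact_mod_cast hb
    linarith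
  have haux := aux_pow ((b : ℚ) + 1) hb1 a ha
  have hfacnn : (0 : ℚ) ≤ ((a * b).factorial : ℚ) := by positivity
  have hafacnn : (0 : ℚ) ≤ (a.factorial : ℚ) := by positivity
  have h1 : ((a * (b+1)).factorial : ℚ) = ((a * b + a).factorial : ℚ) := by
    rw [Nat.mul_succ]
  rw [h1]
  calc (a.factorial : ℚ) ^ (b+1) * ((b+1).factorial : ℚ) * (11/5 : ℚ) ^ (a * (b+1))
      = ((a.factorial : ℚ) * (((b:ℚ)+1) * (11/5 : ℚ) ^ a)) *
          ((a.factorial : ℚ) ^ b * (b.factorial : ℚ) * (11/5 : ℚ) ^ (a * b)) := by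
        rw [Nat.factorial_succ, show a * (b+1) = a * b + a by ring, pow_add, pow_succ]
        push_cast
        ring
    _ ≤ ((a.factorial : ℚ) * (((b:ℚ)+1) * (11/5 : ℚ) ^ a)) * ((a * b).factorial : ℚ) := by
        exact mul_le_mul_of_nonneg_left hP (by positivity)
    _ ≤ ((a.factorial : ℚ) * ((b:ℚ)+1) ^ a) * ((a * b).factorial : ℚ) := by
        apply mul_le_mul_of_nonneg_right _ hfacnn
        exact mul_le_mul_of_nonneg_left haux hafacnn
    _ ≤ ((a * b + a).factorial : ℚ) := key

private lemma base44 : P 4 4 := by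
  unfold P
  norm_num [Nat.factorial]

private lemma base63 : P 6 3 := by
  unfold P
  norm_num [Nat.factorial]

private lemma P_a4 : ∀ a : ℕ, 4 ≤ a → P a 4 := by
  intro a ha
  induction a, ha using Nat.le_induction with
  | base => exact base44
  | succ n hn ih => exact step_a n 4 hn (by norm_num) ih

private lemma P_ge4 : ∀ a : ℕ, 4 ≤ a → ∀ b : ℕ, 4 ≤ b → P a b := by
  intro a ha b hb
  induction b, hb using Nat.le_induction with
  | base => exact P_a4 a ha
  | succ n hn ih => exact step_b a n ha (by omega) ih

private lemma P_b3 : ∀ a : ℕ, 6 ≤ a → P a 3 := by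
  intro a ha
  induction a, ha using Nat.le_induction with
  | base => exact base63
  | succ n hn ih => exact step_a n 3 (by omega) (by norm_num) ih

theorem stmt_12 (a b n : ℕ) (ha : 4 ≤ a) (hb : 3 ≤ b) (hn : n = a * b)
    (hn16 : 16 ≤ n) :
    ((a.factorial : ℚ)) ^ b * (b.factorial : ℚ) * (11 / 5 : ℚ) ^ n ≤
      (n.factorial : ℚ) := by
  subst hn
  rcases Nat.lt_or_ge b 4 with hb4 | hb4
  · have hb3 : b = 3 := by omega
    subst hb3
    have ha6 : 6 ≤ a := by omega
    exact P_b3 a ha6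
  · exact P_ge4 a ha b hb4
end

section
/- Let θ be an automorphism of a generalised quadrangle of order (s,t) fixing f points, and let g be the number of points x with x^θ ≠ x and x^θ collinear with x. If θ is fixed-point-free (f = 0) and gcd(s,t) > 1, then g > 0, i.e., some point is collinear with its image. -/
theorem stmt_15 (s t g : ℕ) (hs : 2 ≤ s) (ht : 2 ≤ t)
    (hgcd : 1 < Nat.gcd s t) (hbenson : g ≡ s * t + 1 [MOD s + t]) :
    g ≠ 0 := by
  rintro rfl
  have hdvd : (s + t) ∣ s * t + 1 := (Nat.modEq_zero_iff_dvd.mp hbenson.symm)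
  have hm1 : Nat.gcd s t ∣ s + t := Nat.dvd_add (Nat.gcd_dvd_left s t) (Nat.gcd_dvd_right s t)
  have hm2 : Nat.gcd s t ∣ s * t := (Nat.gcd_dvd_left s t).mul_right t
  have hm3 : Nat.gcd s t ∣ s * t + 1 := hm1.trans hdvd
  have h1 : Nat.gcd s t ∣ 1 := by simpa using Nat.dvd_sub hm3 hm2
  exact absurd (Nat.le_of_dvd one_pos h1) (by omega)
end
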